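/- arXiv:0802.0953 — 2 statements merged into one kernel-verified Lean document; each statement's English description precedes it below -/
import Mathlib

section
/- Let p be prime and k ≥ 1. A Laurent polynomial F(X) = Σ_{i=l}^r λ_i X^i over Z_{p^k} is a unit in the Laurent polynomial ring if and only if there exists exactly one index j with l ≤ j ≤ r such that gcd(λ_j, p) = 1 (equivalently, λ_j is a unit in Z_{p^k} and p divides λ_i for all i ≠ j). -/
/-!
Reduction `ZMod (p ^ k) → ZMod p` detects units and has nilpotent kernel. Over the domain
`ZMod p` the units of the Laurent polynomial ring are the monomials `c T^n` with `c ≠ 0`, since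
after clearing denominators a unit divides a power of the prime element `X`. Hence a unit `F`
has exactly one coefficient prime to `p`; conversely, such an `F` is a unit monomial plus a
nilpotent.
-/

open LaurentPolynomial

namespace LaurentPolynomial

section Semiring

variable {R : Type*} [Semiring R]

theorem coeff_C_mul_T (a : R) (n m : ℤ) : (C a * T n).coeff m = if n = m then a else 0 := by
  rw [← single_eq_C_mul_T, AddMonoidAlgebra.coeff_single, Finsupp.single_apply]

theorem coeff_sum_C_mul_T (s : Finset ℤ) (c : ℤ → R) (m : ℤ) :
    (∑ i ∈ s, C (c i) * T i).coeff m = if m ∈ s then c m else 0 := by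
  simp only [AddMonoidAlgebra.coeff_sum, Finsupp.finsetSum_apply, coeff_C_mul_T,
    Finset.sum_ite_eq']

end Semiring

section CommRing

variable {R : Type*} [CommRing R]

theorem isNilpotent_of_forall_isNilpotent_coeff {f : R[T;T⁻¹]}
    (h : ∀ m, IsNilpotent (f.coeff m)) : IsNilpotent f := by
  rw [← AddMonoidAlgebra.sum_coeff_single f]
  refine isNilpotent_sum fun m _ => ?_
  rw [single_eq_C_mul_T]
  exact (Commute.all _ _).isNilpotent_mul_right ((h m).map C)

theorem isUnit_of_isUnit_coeff_of_isNilpotent_coeff {f : R[T;T⁻¹]} {n : ℤ}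
    (hn : IsUnit (f.coeff n)) (hm : ∀ m ≠ n, IsNilpotent (f.coeff m)) : IsUnit f := by
  have hsplit : f = C (f.coeff n) * T n + (f - C (f.coeff n) * T n) := by ring
  rw [hsplit]
  refine IsNilpotent.isUnit_add_left_of_commute ?_ ((hn.map C).mul (isUnit_T n))
    (Commute.all _ _)
  refine isNilpotent_of_forall_isNilpotent_coeff fun m => ?_
  rw [AddMonoidAlgebra.coeff_sub, Finsupp.sub_apply, coeff_C_mul_T]
  rcases eq_or_ne n m with rfl | hnm
  · rw [if_pos rfl, sub_self]
    exact IsNilpotent.zero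
  · rw [if_neg hnm, sub_zero]
    exact hm m hnm.symm

theorem isUnit_iff_exists_C_mul_T [IsDomain R] {f : R[T;T⁻¹]} :
    IsUnit f ↔ ∃ a n, IsUnit a ∧ f = C a * T n := by
  refine ⟨fun hf => ?_, fun ⟨a, n, ha, hf⟩ => hf ▸ (ha.map C).mul (isUnit_T n)⟩
  obtain ⟨g, hfg⟩ := hf.exists_right_inv
  obtain ⟨m, a, ha⟩ := exists_T_pow f
  obtain ⟨n, b, hb⟩ := exists_T_pow g
  have hab : a * b = Polynomial.X ^ (m + n) := by
    apply Polynomial.toLaurent_injective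
    rw [map_mul, ha, hb, Polynomial.toLaurent_X_pow, Nat.cast_add, T_add,
      mul_mul_mul_comm, hfg, one_mul]
  obtain ⟨i, -, u, hu⟩ := (dvd_prime_pow Polynomial.prime_X _).mp ⟨b, hab.symm⟩
  obtain ⟨c, hc, hcu⟩ := Polynomial.isUnit_iff.mp (u⁻¹).isUnit
  have ha' : a = Polynomial.C c * Polynomial.X ^ i := by
    rw [hcu, ← hu, mul_comm, Units.mul_inv_cancel_right]
  refine ⟨c, i - m, hc, ?_⟩
  rw [T_sub, ← mul_assoc, ← Polynomial.toLaurent_C_mul_X_pow, ← ha', ha, mul_assoc, ← T_add,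
    add_neg_cancel, T_zero, mul_one]

theorem isUnit_iff_existsUnique_map_coeff_ne_zero {K : Type*} [CommRing K] [IsDomain K]
    (φ : R →+* K) (hunit : ∀ x, φ x ≠ 0 → IsUnit x) (hnil : ∀ x, φ x = 0 → IsNilpotent x)
    {f : R[T;T⁻¹]} : IsUnit f ↔ ∃! n, φ (f.coeff n) ≠ 0 := by
  constructor
  · intro hf
    obtain ⟨a, n, ha, hfa⟩ :=
      isUnit_iff_exists_C_mul_T.mp (hf.map (AddMonoidAlgebra.mapRingHom ℤ φ))
    have hcoeff (m : ℤ) : φ (f.coeff m) = if n = m then a else 0 := by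
      rw [← AddMonoidAlgebra.coeff_mapRingHom, hfa, coeff_C_mul_T]
    refine ⟨n, by simpa [hcoeff] using ha.ne_zero, fun m hm => ?_⟩
    by_contra hmn
    exact hm (by rw [hcoeff, if_neg (Ne.symm hmn)])
  · rintro ⟨n, hn, hm⟩
    exact isUnit_of_isUnit_coeff_of_isNilpotent_coeff (hunit _ hn)
      fun m hmn => hnil _ (by_contra fun h => hmn (hm m h))

end CommRing

end LaurentPolynomial

namespace ZMod

theorem castHom_eq_zero_iff_dvd {m n : ℕ} (h : n ∣ m) (x : ZMod m) :
    castHom h (ZMod n) x = 0 ↔ (n : ZMod m) ∣ x := by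
  constructor
  · obtain ⟨a, rfl⟩ := intCast_surjective x
    rw [map_intCast, intCast_zmod_eq_zero_iff_dvd]
    rintro ⟨b, rfl⟩
    exact ⟨b, by push_cast; rfl⟩
  · rintro ⟨y, rfl⟩
    rw [map_mul, map_natCast, natCast_self, zero_mul]

theorem isUnit_iff_castHom_ne_zero {p k : ℕ} (hp : p.Prime) (hk : k ≠ 0) (x : ZMod (p ^ k)) :
    IsUnit x ↔ castHom (dvd_pow_self p hk) (ZMod p) x ≠ 0 := by
  have : NeZero p := ⟨hp.ne_zero⟩
  obtain ⟨a, rfl⟩ := natCast_zmod_surjective x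
  rw [isUnit_natCast_iff_not_dvd_pow hp (Nat.pos_of_ne_zero hk), map_natCast, Ne,
    natCast_eq_zero_iff]

theorem isNilpotent_of_natCast_dvd {p k : ℕ} {x : ZMod (p ^ k)} (h : (p : ZMod (p ^ k)) ∣ x) :
    IsNilpotent x := by
  obtain ⟨y, rfl⟩ := h
  exact ⟨k, by rw [mul_pow, ← Nat.cast_pow, natCast_self, zero_mul]⟩

end ZMod

theorem existsUnique_and_iff_and_forall {α : Type*} {p q : α → Prop} :
    (∃! j, p j ∧ q j) ↔ ∃! j, p j ∧ q j ∧ ∀ i, p i → i ≠ j → ¬q i :=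
  ⟨fun ⟨j, hj, huniq⟩ =>
    ⟨j, ⟨hj.1, hj.2, fun i hi hij hq => hij (huniq i ⟨hi, hq⟩)⟩,
      fun i hi => huniq i ⟨hi.1, hi.2.1⟩⟩,
   fun ⟨j, hj, _⟩ =>
    ⟨j, ⟨hj.1, hj.2.1⟩, fun i hi => by_contra fun hij => hj.2.2 i hi.1 hij hi.2⟩⟩

theorem laurent_unit_iff_unique_unit_coeff_general (p : ℕ) (hp : p.Prime) (k : ℕ) (hk : 1 ≤ k)
    (l r : ℤ) (lam : ℤ → ZMod (p ^ k))
    (F : LaurentPolynomial (ZMod (p ^ k)))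
    (hF : F = ∑ i ∈ Finset.Icc l r, LaurentPolynomial.C (lam i) * T i) :
    IsUnit F ↔
      ∃! j : ℤ, j ∈ Finset.Icc l r ∧ IsUnit (lam j) ∧
        ∀ i ∈ Finset.Icc l r, i ≠ j → (p : ZMod (p ^ k)) ∣ lam i := by
  have hk0 : k ≠ 0 := by omega
  have : Fact p.Prime := ⟨hp⟩
  set φ := ZMod.castHom (dvd_pow_self p hk0) (ZMod p)
  have hunit (x) : IsUnit x ↔ φ x ≠ 0 := ZMod.isUnit_iff_castHom_ne_zero hp hk0 x
  have hdvd (x) : (p : ZMod (p ^ k)) ∣ x ↔ φ x = 0 := (ZMod.castHom_eq_zero_iff_dvd _ x).symm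
  rw [isUnit_iff_existsUnique_map_coeff_ne_zero φ (fun x => (hunit x).mpr)
    (fun x hx => ZMod.isNilpotent_of_natCast_dvd ((hdvd x).mpr hx))]
  simp only [hunit, hdvd, hF, coeff_sum_C_mul_T, apply_ite φ, map_zero, ite_ne_right_iff]
  exact existsUnique_and_iff_and_forall.trans (by simp only [ne_eq, not_not])

/-- A Laurent polynomial `F = Σ_{i=l}^r λ_i X^i` over `Z_{p^k}` is a unit iff there is
exactly one index `j ∈ [l, r]` with `λ_j` a unit of `Z_{p^k}` and `p ∣ λ_i` for all
other indices `i`. -/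
theorem laurent_unit_iff_unique_unit_coeff (p : ℕ) (hp : p.Prime) (k : ℕ) (hk : 1 ≤ k)
    (l r : ℤ) (hlr : l ≤ r) (lam : ℤ → ZMod (p ^ k))
    (F : LaurentPolynomial (ZMod (p ^ k)))
    (hF : F = ∑ i ∈ Finset.Icc l r, LaurentPolynomial.C (lam i) * T i) :
    IsUnit F ↔
      ∃! j : ℤ, j ∈ Finset.Icc l r ∧ IsUnit (lam j) ∧
        ∀ i ∈ Finset.Icc l r, i ≠ j → (p : ZMod (p ^ k)) ∣ lam i :=
  laurent_unit_iff_unique_unit_coeff_general p hp k hk l r lam F hF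
end

section
/- In Z_4 (= Z_{2^2}), the Laurent polynomial F(X) = 2(X + X^2 + X^3) + X^4 associated with the local rule f(x_1,x_2,x_3,x_4) = 2(x_1+x_2+x_3) + x_4 (mod 4) is invertible, and its inverse is G(X) = 2(X^{-7} + X^{-6} + X^{-5}) + X^{-4}, i.e., F(X)·G(X) = 1 in (Z_4)[X, X^{-1}]. -/
/-!
Both polynomials are monomial multiples of `P = 2(1 + X + X²) + X³`: `F = X · P` and
`G = X⁻⁷ · P`. Over `ℤ/4` the cross terms of `P²` carry a factor `4`, so `P² = X⁶` and
`F · G = X⁻⁶ · X⁶ = 1`.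
-/

open LaurentPolynomial

theorem sq_two_mul_add_of_four_eq_zero {R : Type*} [CommRing R] (h4 : (4 : R) = 0) (p u : R) :
    (2 * p + u) ^ 2 = u ^ 2 := by
  linear_combination (p ^ 2 + p * u) * h4

theorem LaurentPolynomial.natCast_eq_zero {R : Type*} [Semiring R] {n : ℕ} (h : (n : R) = 0) :
    (n : R[T;T⁻¹]) = 0 := by
  rw [← map_natCast C, h, map_zero]

/-- In `(Z_4)[X, X^{-1}]`, `F(X) = 2X + 2X² + 2X³ + X⁴` is invertible with inverse
`G(X) = 2X^{-7} + 2X^{-6} + 2X^{-5} + X^{-4}`. -/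
theorem example_invertible_CA
    (F G : LaurentPolynomial (ZMod 4))
    (hF : F = LaurentPolynomial.C 2 * T 1 + LaurentPolynomial.C 2 * T 2 +
      LaurentPolynomial.C 2 * T 3 + T 4)
    (hG : G = LaurentPolynomial.C 2 * T (-7) + LaurentPolynomial.C 2 * T (-6) +
      LaurentPolynomial.C 2 * T (-5) + T (-4)) :
    IsUnit F ∧ F * G = 1 := by
  set P : (ZMod 4)[T;T⁻¹] := 2 * (1 + T 1 + T 2) + T 3
  have hFP : F = T 1 * P := by
    simp only [hF, P, map_ofNat, mul_add, mul_left_comm (T _) 2, mul_one, ← T_add]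
    norm_num
  have hGP : G = T (-7) * P := by
    simp only [hG, P, map_ofNat, mul_add, mul_left_comm (T _) 2, mul_one, ← T_add]
    norm_num
  have hP : P ^ 2 = T 6 := by
    have h4 : (4 : (ZMod 4)[T;T⁻¹]) = 0 := by
      exact_mod_cast LaurentPolynomial.natCast_eq_zero (ZMod.natCast_self 4)
    rw [sq_two_mul_add_of_four_eq_zero h4, T_pow]
    rfl
  have hFG : F * G = 1 := by
    rw [hFP, hGP, mul_mul_mul_comm, ← sq, hP, ← T_add, ← T_add]
    exact T_zero
  exact ⟨IsUnit.of_mul_eq_one G hFG, hFG⟩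
end
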